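/- If w is a finite or infinite rich word over an alphabet of size q and n is a positive integer, then the factor complexity of w satisfies F_w(n) ≤ c₁ · n^{c₂ ln n}. -/

import Mathlib

/-- A finite word is a palindrome if it equals its reversal. -/
def IsPalindrome {A : Type*} (w : List A) : Prop := w.reverse = w

/-- A finite word `w` is rich if it contains `|w| + 1` distinct palindromic
factors, including the empty word. -/
def IsRichWord {A : Type*} (w : List A) : Prop :=
  {u : List A | u <:+: w ∧ IsPalindrome u}.ncard = w.length + 1

/-- Factor complexity of a finite word: the number of distinct factors of length `n`. -/
noncomputable def FinFactorComplexity {A : Type*} (w : List A) (n : ℕ) : ℕ :=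
  {u : List A | u <:+: w ∧ u.length = n}.ncard

/-- `u` is a (finite) factor of the infinite word `x : ℕ → A`. -/
def IsInfFactor {A : Type*} (x : ℕ → A) (u : List A) : Prop :=
  ∃ i : ℕ, u = (List.range u.length).map fun j => x (i + j)

/-- Factor complexity of an infinite word: the number of distinct factors of length `n`. -/
noncomputable def InfFactorComplexity {A : Type*} (x : ℕ → A) (n : ℕ) : ℕ :=
  {u : List A | IsInfFactor x u ∧ u.length = n}.ncard

/-- An infinite word is rich if all its finite factors are rich. -/
def IsRichInfWord {A : Type*} (x : ℕ → A) : Prop :=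
  ∀ u : List A, IsInfFactor x u → IsRichWord u

/-!
Let `F(k)` and `P(k)` count the factors and the palindromic factors of length `k` of a rich
word `w`, and read every factor at its first occurrence in `w`. A factor `x` of length `m + 1`
whose tail first occurs at the same place as `x` is determined by that tail. Otherwise `x` is
sent to the palindromic suffix of the prefix of `w` ending at the first occurrence of `x`, or
of `xᴿ`, that occurs nowhere earlier; richness means exactly that every prefix has such a
suffix. This map is injective, so `F(m + 1) ≤ F(m) + P(1) + ⋯ + P(m + 1)`. A palindrome is
determined by its first half, so `P(k) ≤ F(⌈k/2⌉)`, whence `F(n) ≤ 1 + n² max_{k ≤ ⌈n/2⌉} F(k)`.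
Since `ln n ≥ ln ⌈n/2⌉ + ln (3/2)`, the bound `c₁ n^{c₂ ln n}` survives this recursion once
`c₂ ln (3/2) ≥ 3`, and it holds for `n = 1` once `c₁ ≥ q`; the given constants satisfy both, as
`δ ln (3/2) = 3/2`. The factors of length `n` of an infinite word all occur in one prefix.
-/

open Real

namespace List

variable {α : Type*}

theorem finite_setOf_infix_and (w : List α) (P : List α → Prop) :
    {u | u <:+: w ∧ P u}.Finite :=
  w.sublists.finite_toSet.subset fun _ hu => mem_sublists.2 hu.1.sublist

theorem IsInfix.isSuffix_of_not_infix_dropLast {u w : List α} (h : u <:+: w)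
    (h' : ¬ u <:+: w.dropLast) : u <:+ w := by
  obtain ⟨s, t, rfl⟩ := h
  rcases eq_nil_or_concat t with rfl | ⟨t, b, rfl⟩
  · exact ⟨s, by simp⟩
  · exact absurd ⟨s, t, by simp [← append_assoc]⟩ h'

theorem IsPrefix.infix_dropLast_of_isSuffix {u p t : List α} (hu : u <+: p) (hp : p <:+ t)
    (hlt : u.length < p.length) : u <:+: t.dropLast := by
  obtain ⟨v, rfl⟩ := hu
  obtain ⟨s, rfl⟩ := hp
  have hv : v ≠ [] := by rintro rfl; simp at hlt
  exact ⟨s, v.dropLast, by rw [← append_assoc, dropLast_append_of_ne_nil hv]⟩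

theorem dropLast_take_of_le_length {w : List α} {j : ℕ} (h : j ≤ w.length) :
    (w.take j).dropLast = w.take (j - 1) := by
  rw [dropLast_eq_take, take_take, length_take, min_eq_left h, min_eq_left (Nat.sub_le _ _)]

end List

open List

section Palindromes

variable {A : Type*}

theorem IsPalindrome.reverse_prefix_of_suffix {u p : List A} (hp : IsPalindrome p)
    (h : u <:+ p) : u.reverse <+: p :=
  hp ▸ h.reverse

theorem IsPalindrome.eq_take_append_reverse {p : List A} (hp : IsPalindrome p) {h : ℕ}
    (h₁ : h ≤ p.length) (h₂ : p.length ≤ 2 * h) :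
    p = p.take h ++ ((p.take h).take (p.length - h)).reverse := by
  have hdrop : p.drop h = (p.take (p.length - h)).reverse := by
    rw [reverse_take, hp, Nat.sub_sub_self h₁]
  rw [take_take, min_eq_left (by omega), ← hdrop, take_append_drop]

def palFactors (w : List A) : Set (List A) := {u | u <:+: w ∧ IsPalindrome u}

theorem palFactors_mono {v w : List A} (h : v <:+: w) : palFactors v ⊆ palFactors w :=
  fun _ hu => ⟨hu.1.trans h, hu.2⟩

/-- Of two palindromic suffixes, the shorter is also a prefix of the longer, so it occurs
before the last letter. -/
theorem palFactors_append_singleton_sdiff_subsingleton (w : List A) (a : A) :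
    (palFactors (w ++ [a]) \ palFactors w).Subsingleton := by
  have suffix_of_new : ∀ p ∈ palFactors (w ++ [a]) \ palFactors w, p <:+ w ++ [a] :=
    fun p ⟨⟨hp, hpal⟩, hnew⟩ => hp.isSuffix_of_not_infix_dropLast
      (by rw [dropLast_concat]; exact fun h => hnew ⟨h, hpal⟩)
  have key : ∀ p ∈ palFactors (w ++ [a]) \ palFactors w,
      ∀ q ∈ palFactors (w ++ [a]) \ palFactors w, p.length ≤ q.length → p = q := by
    intro p hp q hq hle
    have hpq : p <:+ q :=
      suffix_of_suffix_length_le (suffix_of_new p hp) (suffix_of_new q hq) hle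
    refine hpq.eq_of_length (le_antisymm hle (not_lt.1 fun hlt => hp.2 ⟨?_, hp.1.2⟩))
    have := (hq.1.2.reverse_prefix_of_suffix hpq).infix_dropLast_of_isSuffix
      (suffix_of_new q hq) (by simpa using hlt)
    rwa [hp.1.2, dropLast_concat] at this
  intro p hp q hq
  rcases le_total p.length q.length with hle | hle
  exacts [key p hp q hq hle, (key q hq p hp hle).symm]

theorem ncard_palFactors_append_singleton_le (w : List A) (a : A) :
    (palFactors (w ++ [a])).ncard ≤ (palFactors w).ncard + 1 := by
  rw [← Set.ncard_sdiff_add_ncard_of_subset (palFactors_mono (prefix_append w [a]).isInfix)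
    (finite_setOf_infix_and _ _), add_comm]
  exact Nat.add_le_add_left ((Set.ncard_le_one (finite_setOf_infix_and _ _).sdiff).2
    (palFactors_append_singleton_sdiff_subsingleton w a)) _

theorem ncard_palFactors_le (w : List A) : (palFactors w).ncard ≤ w.length + 1 := by
  induction w using List.reverseRecOn with
  | nil =>
    exact (Set.ncard_le_one (finite_setOf_infix_and _ _)).2 fun u hu v hv => by
      rw [infix_nil.1 hu.1, infix_nil.1 hv.1]
  | append_singleton w a ih =>
    simpa using (ncard_palFactors_append_singleton_le w a).trans (Nat.add_le_add_right ih 1)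

end Palindromes

section Richness

variable {A : Type*}

theorem IsRichWord.of_append_singleton {w : List A} {a : A} (h : IsRichWord (w ++ [a])) :
    IsRichWord w := by
  have h' : (palFactors (w ++ [a])).ncard = (w ++ [a]).length + 1 := h
  rw [length_append, length_singleton] at h'
  have := ncard_palFactors_append_singleton_le w a
  have := ncard_palFactors_le w
  change (palFactors w).ncard = w.length + 1
  omega

theorem IsRichWord.of_prefix {v w : List A} (hw : IsRichWord w) (h : v <+: w) :
    IsRichWord v := by
  obtain ⟨t, rfl⟩ := h
  induction t using List.reverseRecOn with
  | nil => simpa using hw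
  | append_singleton t a ih =>
    rw [← append_assoc] at hw
    exact ih hw.of_append_singleton

theorem IsRichWord.exists_palindrome_suffix {v : List A} (hv : IsRichWord v) (hne : v ≠ []) :
    ∃ p, p <:+ v ∧ IsPalindrome p ∧ ¬ p <:+: v.dropLast := by
  obtain ⟨w, a, rfl⟩ := (eq_nil_or_concat' v).resolve_left hne
  have hnew : ¬ palFactors (w ++ [a]) ⊆ palFactors w := fun hsub => by
    have := Set.ncard_le_ncard hsub (finite_setOf_infix_and _ _)
    have h₁ : (palFactors (w ++ [a])).ncard = (w ++ [a]).length + 1 := hv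
    rw [length_append, length_singleton] at h₁
    have h₂ : (palFactors w).ncard = w.length + 1 := hv.of_append_singleton
    omega
  obtain ⟨p, ⟨hp, hpal⟩, hpw⟩ := Set.not_subset.1 hnew
  have hpw' : ¬ p <:+: (w ++ [a]).dropLast := by
    rw [dropLast_concat]
    exact fun h => hpw ⟨h, hpal⟩
  exact ⟨p, hp.isSuffix_of_not_infix_dropLast hpw', hpal, hpw'⟩

open Classical in
/-- Equal to `[]` when `v` has no such suffix. -/
noncomputable def newPalSuffix (v : List A) : List A :=
  if h : ∃ p, p <:+ v ∧ IsPalindrome p ∧ ¬ p <:+: v.dropLast then h.choose else []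

variable {w : List A}

theorem IsRichWord.newPalSuffix_take (hw : IsRichWord w) {j : ℕ} (hj : j ∈ Set.Icc 1 w.length) :
    newPalSuffix (w.take j) <:+ w.take j ∧ IsPalindrome (newPalSuffix (w.take j)) ∧
      ¬ newPalSuffix (w.take j) <:+: w.take (j - 1) := by
  have h := (hw.of_prefix (take_prefix j w)).exists_palindrome_suffix
    (ne_nil_of_length_pos (by rw [length_take]; exact lt_min hj.1 (Nat.lt_of_lt_of_le hj.1 hj.2)))
  rw [newPalSuffix, dif_pos h, ← dropLast_take_of_le_length hj.2]
  exact h.choose_spec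

theorem IsRichWord.newPalSuffix_take_injOn (hw : IsRichWord w) :
    Set.InjOn (fun j => newPalSuffix (w.take j)) (Set.Icc 1 w.length) := by
  have key : ∀ j ∈ Set.Icc 1 w.length, ∀ j' ∈ Set.Icc 1 w.length, j < j' →
      newPalSuffix (w.take j) ≠ newPalSuffix (w.take j') := fun j hj j' hj' hlt heq =>
    (hw.newPalSuffix_take hj').2.2 <| heq ▸
      (hw.newPalSuffix_take hj).1.isInfix.trans (take_prefix_take_left (by omega)).isInfix
  intro j hj j' hj' heq
  rcases lt_trichotomy j j' with h | h | h
  exacts [absurd heq (key j hj j' hj' h), h, absurd heq.symm (key j' hj' j hj h)]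

end Richness

section FirstOccurrence

variable {A : Type*} {w u : List A}

noncomputable def firstOccEnd (w u : List A) : ℕ := sInf {j | u <:+: w.take j}

theorem infix_take_firstOccEnd (hu : u <:+: w) : u <:+: w.take (firstOccEnd w u) :=
  Nat.sInf_mem (s := {j | u <:+: w.take j}) ⟨w.length, by simpa using hu⟩

theorem firstOccEnd_le {j : ℕ} (h : u <:+: w.take j) : firstOccEnd w u ≤ j :=
  Nat.sInf_le h

theorem not_infix_take_of_lt_firstOccEnd {j : ℕ} (h : j < firstOccEnd w u) :
    ¬ u <:+: w.take j :=
  Nat.notMem_of_lt_sInf h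

theorem firstOccEnd_le_length (hu : u <:+: w) : firstOccEnd w u ≤ w.length :=
  firstOccEnd_le (by simpa using hu)

theorem length_le_firstOccEnd (hu : u <:+: w) : u.length ≤ firstOccEnd w u :=
  (infix_take_firstOccEnd hu).length_le.trans (length_take_le _ _)

theorem firstOccEnd_mem_Icc (hu : u <:+: w) (hne : u ≠ []) :
    firstOccEnd w u ∈ Set.Icc 1 w.length :=
  ⟨(length_pos_iff.2 hne).trans_le (length_le_firstOccEnd hu), firstOccEnd_le_length hu⟩

theorem isSuffix_take_firstOccEnd (hu : u <:+: w) (hne : u ≠ []) :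
    u <:+ w.take (firstOccEnd w u) := by
  refine (infix_take_firstOccEnd hu).isSuffix_of_not_infix_dropLast ?_
  rw [dropLast_take_of_le_length (firstOccEnd_le_length hu)]
  exact not_infix_take_of_lt_firstOccEnd (by have := (firstOccEnd_mem_Icc hu hne).1; omega)

theorem eq_of_firstOccEnd_eq {v : List A} (hu : u <:+: w) (hv : v <:+: w) (hne : u ≠ [])
    (hlen : u.length = v.length) (h : firstOccEnd w u = firstOccEnd w v) : u = v := by
  have hv' : v <:+ w.take (firstOccEnd w u) :=
    h ▸ isSuffix_take_firstOccEnd hv (ne_nil_of_length_pos (hlen ▸ length_pos_iff.2 hne))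
  exact (suffix_of_suffix_length_le (isSuffix_take_firstOccEnd hu hne) hv' hlen.le).eq_of_length
    hlen

theorem firstOccEnd_tail (hu : u <:+: w) (hne : u ≠ [])
    (h : ¬ u.tail <:+: w.take (firstOccEnd w u - 1)) :
    firstOccEnd w u.tail = firstOccEnd w u := by
  refine le_antisymm
    (firstOccEnd_le ((tail_suffix u).trans (isSuffix_take_firstOccEnd hu hne)).isInfix)
    (not_lt.1 fun hlt => h ?_)
  exact (infix_take_firstOccEnd ((tail_suffix u).isInfix.trans hu)).trans
    (take_prefix_take_left (by omega)).isInfix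

end FirstOccurrence

section Counting

variable {A : Type*} {w : List A}

noncomputable def palComplexity (w : List A) (k : ℕ) : ℕ :=
  {u | u <:+: w ∧ IsPalindrome u ∧ u.length = k}.ncard

def palFactorsUpTo (w : List A) (K : ℕ) : Set (List A) :=
  {p | p <:+: w ∧ IsPalindrome p ∧ p ≠ [] ∧ p.length ≤ K}

theorem ncard_factors_tail_not_earlier_le (w : List A) (m : ℕ) :
    ({x | x <:+: w ∧ x.length = m + 1} \ {x | x.tail <:+: w.take (firstOccEnd w x - 1)}).ncard
      ≤ FinFactorComplexity w m := by
  refine Set.ncard_le_ncard_of_injOn tail ?_ ?_ (finite_setOf_infix_and w _)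
  · rintro x ⟨⟨hx, hlen⟩, -⟩
    exact ⟨(tail_suffix x).isInfix.trans hx, by simp [hlen]⟩
  · rintro x ⟨⟨hx, hlen⟩, hx'⟩ y ⟨⟨hy, hlen'⟩, hy'⟩ heq
    have hx0 : x ≠ [] := ne_nil_of_length_pos (by omega)
    have hy0 : y ≠ [] := ne_nil_of_length_pos (by omega)
    refine eq_of_firstOccEnd_eq hx hy hx0 (by omega) ?_
    rw [← firstOccEnd_tail hx hx0 hx', ← firstOccEnd_tail hy hy0 hy', heq]

theorem IsRichWord.newPalSuffix_take_mem (hw : IsRichWord w) {j : ℕ}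
    (hj : j ∈ Set.Icc 1 w.length) :
    newPalSuffix (w.take j) <:+: w ∧ IsPalindrome (newPalSuffix (w.take j)) ∧
      newPalSuffix (w.take j) ≠ [] := by
  obtain ⟨hp, hpal, hnew⟩ := hw.newPalSuffix_take hj
  exact ⟨hp.isInfix.trans (take_prefix j w).isInfix, hpal, fun h => hnew (h ▸ nil_infix)⟩

theorem IsRichWord.newPalSuffix_eq_or_of_tail_infix (hw : IsRichWord w) {x : List A} {m : ℕ}
    (hx : x <:+: w) (hlen : x.length = m + 1)
    (htail : x.tail <:+: w.take (firstOccEnd w x - 1)) :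
    newPalSuffix (w.take (firstOccEnd w x)) = x ∨
      (x.reverse <:+: w ∧ (newPalSuffix (w.take (firstOccEnd w x.reverse))).length ≤ m) := by
  have hx0 : x ≠ [] := ne_nil_of_length_pos (by omega)
  have hxj := isSuffix_take_firstOccEnd hx hx0
  obtain ⟨hp, hpal, hpnew⟩ := hw.newPalSuffix_take (firstOccEnd_mem_Icc hx hx0)
  set j := firstOccEnd w x
  set p := newPalSuffix (w.take j)
  -- a shorter `p` would be a suffix of the tail of `x`, which occurs before `j`
  have hxp : x <:+ p := by
    refine suffix_of_suffix_length_le hxj hp (not_lt.1 fun hlt => hpnew ?_)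
    exact (suffix_of_suffix_length_le hp ((tail_suffix x).trans hxj)
      (by simp; omega)).isInfix.trans htail
  rcases eq_or_lt_of_le hxp.length_le with heq | hlt
  · exact Or.inl (hxp.eq_of_length heq).symm
  have hxr : x.reverse <:+: w.take (j - 1) := by
    rw [← dropLast_take_of_le_length (firstOccEnd_le_length hx)]
    exact (hpal.reverse_prefix_of_suffix hxp).infix_dropLast_of_isSuffix hp (by simpa using hlt)
  have hxrw : x.reverse <:+: w := hxr.trans (take_prefix _ _).isInfix
  refine Or.inr ⟨hxrw, not_lt.1 fun hlt' => ?_⟩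
  -- a longer palindrome `r` ending at the first occurrence of `xᴿ` would begin with `x`
  have hxr0 : x.reverse ≠ [] := by simpa using hx0
  obtain ⟨hr, hrpal, -⟩ := hw.newPalSuffix_take (firstOccEnd_mem_Icc hxrw hxr0)
  have hxr_r : x.reverse <:+ newPalSuffix (w.take (firstOccEnd w x.reverse)) :=
    suffix_of_suffix_length_le (isSuffix_take_firstOccEnd hxrw hxr0) hr (by simp; omega)
  have hx_early : x <:+: w.take (firstOccEnd w x.reverse) := by
    simpa using (hrpal.reverse_prefix_of_suffix hxr_r).isInfix.trans hr.isInfix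
  have := (firstOccEnd_mem_Icc hx hx0).1
  exact not_infix_take_of_lt_firstOccEnd (by have := firstOccEnd_le hxr; omega) hx_early

theorem IsRichWord.ncard_factors_tail_earlier_le (hw : IsRichWord w) (m : ℕ) :
    ({x | x <:+: w ∧ x.length = m + 1} ∩ {x | x.tail <:+: w.take (firstOccEnd w x - 1)}).ncard
      ≤ (palFactorsUpTo w (m + 1)).ncard := by
  classical
  -- injective since new palindromic suffixes at distinct positions differ, and a factor is
  -- determined by its length and the end of its first occurrence
  let f : List A → List A := fun x =>
    if newPalSuffix (w.take (firstOccEnd w x)) = x then x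
    else newPalSuffix (w.take (firstOccEnd w x.reverse))
  refine Set.ncard_le_ncard_of_injOn f ?_ ?_ (finite_setOf_infix_and w _)
  · rintro x ⟨⟨hx, hlen⟩, htail⟩
    have hx0 : x ≠ [] := ne_nil_of_length_pos (by omega)
    by_cases h : newPalSuffix (w.take (firstOccEnd w x)) = x
    · obtain ⟨-, hpal, -⟩ := hw.newPalSuffix_take_mem (firstOccEnd_mem_Icc hx hx0)
      simp only [f, if_pos h]
      exact ⟨hx, h ▸ hpal, hx0, hlen.le⟩
    · obtain ⟨hxr, hshort⟩ :=
        (hw.newPalSuffix_eq_or_of_tail_infix hx hlen htail).resolve_left h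
      obtain ⟨hr, hrpal, hr0⟩ :=
        hw.newPalSuffix_take_mem (firstOccEnd_mem_Icc hxr (by simpa using hx0))
      simp only [f, if_neg h]
      exact ⟨hr, hrpal, hr0, by omega⟩
  · rintro x ⟨⟨hx, hlen⟩, hxt⟩ y ⟨⟨hy, hlen'⟩, hyt⟩ hfxy
    have hx0 : x ≠ [] := ne_nil_of_length_pos (by omega)
    have hy0 : y ≠ [] := ne_nil_of_length_pos (by omega)
    have hcases := hw.newPalSuffix_eq_or_of_tail_infix hx hlen hxt
    have hcases' := hw.newPalSuffix_eq_or_of_tail_infix hy hlen' hyt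
    by_cases h : newPalSuffix (w.take (firstOccEnd w x)) = x <;>
      by_cases h' : newPalSuffix (w.take (firstOccEnd w y)) = y <;>
      simp only [f, h, h', if_true, if_false] at hfxy
    · exact hfxy
    · have := (hcases'.resolve_left h').2
      rw [← hfxy] at this
      omega
    · have := (hcases.resolve_left h).2
      rw [hfxy] at this
      omega
    · obtain ⟨hxr, -⟩ := hcases.resolve_left h
      obtain ⟨hyr, -⟩ := hcases'.resolve_left h'
      have hpos := hw.newPalSuffix_take_injOn (firstOccEnd_mem_Icc hxr (by simpa using hx0))
        (firstOccEnd_mem_Icc hyr (by simpa using hy0)) hfxy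
      exact reverse_inj.1 (eq_of_firstOccEnd_eq hxr hyr (by simpa using hx0) (by simp; omega) hpos)

theorem IsRichWord.finFactorComplexity_succ_le (hw : IsRichWord w) (m : ℕ) :
    FinFactorComplexity w (m + 1) ≤
      FinFactorComplexity w m + (palFactorsUpTo w (m + 1)).ncard := by
  rw [FinFactorComplexity, ← Set.ncard_inter_add_ncard_sdiff_eq_ncard _
    {x | x.tail <:+: w.take (firstOccEnd w x - 1)} (finite_setOf_infix_and w _)]
  have := ncard_factors_tail_not_earlier_le w m
  have := hw.ncard_factors_tail_earlier_le m
  omega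

theorem ncard_palFactorsUpTo_le (w : List A) (K : ℕ) :
    (palFactorsUpTo w K).ncard ≤ ∑ k ∈ Finset.range K, palComplexity w (k + 1) := by
  induction K with
  | zero =>
    have : palFactorsUpTo w 0 = ∅ := Set.eq_empty_of_forall_notMem fun _ hp =>
      hp.2.2.1 (length_eq_zero_iff.1 (Nat.le_zero.1 hp.2.2.2))
    simp [this]
  | succ K ih =>
    have hsub : palFactorsUpTo w (K + 1) ⊆
        palFactorsUpTo w K ∪ {u | u <:+: w ∧ IsPalindrome u ∧ u.length = K + 1} := by
      rintro p ⟨hp, hpal, hne, hlen⟩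
      rcases Nat.lt_or_ge p.length (K + 1) with h | h
      exacts [Or.inl ⟨hp, hpal, hne, by omega⟩, Or.inr ⟨hp, hpal, by omega⟩]
    rw [Finset.sum_range_succ]
    refine (Set.ncard_le_ncard hsub ((finite_setOf_infix_and w _).union
      (finite_setOf_infix_and w _))).trans ((Set.ncard_union_le _ _).trans ?_)
    exact Nat.add_le_add_right ih _

theorem palComplexity_le (w : List A) (k : ℕ) :
    palComplexity w k ≤ FinFactorComplexity w ((k + 1) / 2) := by
  refine Set.ncard_le_ncard_of_injOn (take ((k + 1) / 2)) ?_ ?_ (finite_setOf_infix_and w _)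
  · rintro p ⟨hp, -, hlen⟩
    exact ⟨(take_prefix _ p).isInfix.trans hp, by simp; omega⟩
  · rintro p ⟨-, hp, hlen⟩ q ⟨-, hq, hlen'⟩ heq
    calc p = _ := hp.eq_take_append_reverse (h := (k + 1) / 2) (by omega) (by omega)
      _ = _ := by rw [heq, hlen, hlen']
      _ = q := (hq.eq_take_append_reverse (by omega) (by omega)).symm

theorem finFactorComplexity_zero_le (w : List A) : FinFactorComplexity w 0 ≤ 1 :=
  (Set.ncard_le_one (finite_setOf_infix_and w _)).2 fun u hu v hv => by
    rw [length_eq_zero_iff.1 hu.2, length_eq_zero_iff.1 hv.2]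

theorem finFactorComplexity_one_le [Fintype A] (w : List A) :
    FinFactorComplexity w 1 ≤ Fintype.card A :=
  calc FinFactorComplexity w 1 ≤ ((fun a : A => [a]) '' Set.univ).ncard :=
        Set.ncard_le_ncard (fun u hu => by
          obtain ⟨a, rfl⟩ := length_eq_one_iff.1 hu.2
          exact ⟨a, trivial, rfl⟩) (Set.toFinite _)
    _ ≤ (Set.univ : Set A).ncard := Set.ncard_image_le (Set.toFinite _)
    _ = Fintype.card A := by rw [Set.ncard_univ, Nat.card_eq_fintype_card]

theorem IsRichWord.finFactorComplexity_le (hw : IsRichWord w) (n : ℕ) :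
    FinFactorComplexity w n ≤ 1 + n * ∑ k ∈ Finset.range n, palComplexity w (k + 1) := by
  suffices ∀ m ≤ n,
      FinFactorComplexity w m ≤ 1 + m * ∑ k ∈ Finset.range n, palComplexity w (k + 1) from
    this n le_rfl
  intro m hm
  induction m with
  | zero => simpa using finFactorComplexity_zero_le w
  | succ m ih =>
    have := hw.finFactorComplexity_succ_le m
    have := (ncard_palFactorsUpTo_le w (m + 1)).trans
      (Finset.sum_le_sum_of_subset (Finset.range_subset_range.2 hm))
    have := ih (by omega)
    rw [Nat.succ_mul]
    omega

end Counting

section Growth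

theorem one_le_rpow_mul_log_self {c x : ℝ} (hc : 0 ≤ c) (hx : 1 ≤ x) :
    1 ≤ x ^ (c * log x) :=
  one_le_rpow hx (mul_nonneg hc (log_nonneg hx))

theorem rpow_mul_log_self_le_of_le {c x y : ℝ} (hc : 0 ≤ c) (hx : 1 ≤ x) (hxy : x ≤ y) :
    x ^ (c * log x) ≤ y ^ (c * log y) :=
  (rpow_le_rpow (by linarith) hxy (mul_nonneg hc (log_nonneg hx))).trans
    (rpow_le_rpow_of_exponent_le (hx.trans hxy)
      (mul_le_mul_of_nonneg_left (log_le_log (by linarith) hxy) hc))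

theorem one_add_sq_mul_rpow_mul_log_le {c x y : ℝ} (hc : 3 ≤ c * log (3 / 2)) (hx : 2 ≤ x)
    (hy : 1 ≤ y) (hxy : 3 * y ≤ 2 * x) :
    (1 + x ^ 2) * y ^ (c * log y) ≤ x ^ (c * log x) := by
  have hℓ : 0 < log (3 / 2) := log_pos (by norm_num)
  have hc0 : 0 ≤ c := by nlinarith
  have hM : 0 ≤ log y := log_nonneg hy
  have hLM : log y + log (3 / 2) ≤ log x := by
    rw [← log_mul (by positivity) (by norm_num)]
    exact log_le_log (by positivity) (by linarith)
  -- `c (ln² x - ln² y) = c (ln x - ln y) (ln x + ln y) ≥ c ln (3/2) ln x ≥ 3 ln x`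
  have hexp : 3 * log x + log y * (c * log y) ≤ log x * (c * log x) := by
    nlinarith [mul_nonneg (mul_nonneg hc0 (by linarith : 0 ≤ log x - log y - log (3 / 2)))
      (by linarith : 0 ≤ log x + log y), mul_nonneg (mul_nonneg hc0 hℓ.le) hM,
      mul_nonneg (by linarith : 0 ≤ c * log (3 / 2) - 3) (by linarith : 0 ≤ log x)]
  calc (1 + x ^ 2) * y ^ (c * log y) ≤ x ^ 3 * exp (log y * (c * log y)) := by
        rw [rpow_def_of_pos (by linarith)]
        gcongr
        nlinarith
    _ = exp (3 * log x + log y * (c * log y)) := by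
        rw [exp_add, show (3 : ℝ) * log x = log (x ^ 3) by rw [log_pow]; norm_num,
          exp_log (by positivity)]
    _ ≤ exp (log x * (c * log x)) := exp_le_exp.2 hexp
    _ = x ^ (c * log x) := (rpow_def_of_pos (by linarith) _).symm

end Growth

theorem IsRichWord.finFactorComplexity_le_rpow {A : Type*} [Fintype A] {w : List A}
    (hw : IsRichWord w) {c₁ c₂ : ℝ} (hc₁ : 1 ≤ c₁)
    (hcard : (Fintype.card A : ℝ) ≤ c₁) (hc₂ : 3 ≤ c₂ * log (3 / 2)) {n : ℕ} (hn : 1 ≤ n) :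
    (FinFactorComplexity w n : ℝ) ≤ c₁ * (n : ℝ) ^ (c₂ * log n) := by
  have hc₂0 : 0 ≤ c₂ := by nlinarith [log_pos (by norm_num : (1 : ℝ) < 3 / 2)]
  induction n using Nat.strong_induction_on with
  | _ n ih =>
  rcases hn.eq_or_lt with rfl | hn2
  · simpa using (Nat.cast_le.2 (finFactorComplexity_one_le w)).trans hcard
  set H := (n + 1) / 2
  set B := c₁ * (H : ℝ) ^ (c₂ * log H)
  have hH : (1 : ℝ) ≤ H := by exact_mod_cast (show 1 ≤ H by omega)
  have hB : 1 ≤ B := one_le_mul_of_one_le_of_one_le hc₁ (one_le_rpow_mul_log_self hc₂0 hH)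
  have hP : ∀ k ∈ Finset.range n, (palComplexity w (k + 1) : ℝ) ≤ B := fun k hk => by
    have hk := Finset.mem_range.1 hk
    calc (palComplexity w (k + 1) : ℝ) ≤ FinFactorComplexity w ((k + 2) / 2) := by
          exact_mod_cast palComplexity_le w (k + 1)
      _ ≤ c₁ * (((k + 2) / 2 : ℕ) : ℝ) ^ (c₂ * log ((k + 2) / 2 : ℕ)) :=
          ih _ (by omega) (by omega)
      _ ≤ B := mul_le_mul_of_nonneg_left (rpow_mul_log_self_le_of_le hc₂0
          (by exact_mod_cast (show 1 ≤ (k + 2) / 2 by omega))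
          (by exact_mod_cast (show (k + 2) / 2 ≤ H by omega))) (by linarith)
  have hrec : (FinFactorComplexity w n : ℝ) ≤ 1 + n * (n * B) := by
    have hsum : ∑ k ∈ Finset.range n, (palComplexity w (k + 1) : ℝ) ≤ n * B := by
      simpa using Finset.sum_le_sum hP
    have := (Nat.cast_le (α := ℝ)).2 (hw.finFactorComplexity_le n)
    push_cast at this
    exact this.trans (by gcongr)
  calc (FinFactorComplexity w n : ℝ) ≤ (1 + (n : ℝ) ^ 2) * B := by nlinarith
    _ = c₁ * ((1 + (n : ℝ) ^ 2) * (H : ℝ) ^ (c₂ * log H)) := by ring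
    _ ≤ c₁ * (n : ℝ) ^ (c₂ * log n) := mul_le_mul_of_nonneg_left
        (one_add_sq_mul_rpow_mul_log_le hc₂ (by exact_mod_cast hn2) hH
          (by exact_mod_cast (show 3 * H ≤ 2 * n by omega))) (by linarith)

section InfiniteWords

variable {A : Type*}

theorem map_range_add_infix_map_range (x : ℕ → A) {i n N : ℕ} (h : i + n ≤ N) :
    (List.range n).map (fun j => x (i + j)) <:+: (List.range N).map x := by
  obtain ⟨r, rfl⟩ : ∃ r, N = i + n + r := ⟨N - (i + n), by omega⟩
  refine ⟨(List.range i).map x, (List.range r).map (fun j => x (i + n + j)), ?_⟩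
  simp [range_add, Function.comp_def, add_assoc]

theorem isInfFactor_map_range (x : ℕ → A) (N : ℕ) : IsInfFactor x ((List.range N).map x) :=
  ⟨0, by simp⟩

theorem exists_infFactorComplexity_le_map_range [Finite A] (x : ℕ → A) (n : ℕ) :
    ∃ N, InfFactorComplexity x n ≤ FinFactorComplexity ((List.range N).map x) n := by
  have hfin : {u | IsInfFactor x u ∧ u.length = n}.Finite :=
    (List.finite_length_eq A n).subset fun _ h => h.2
  have : ∀ᶠ N in Filter.atTop, ∀ u ∈ {u | IsInfFactor x u ∧ u.length = n},
      u <:+: (List.range N).map x := by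
    refine (Filter.eventually_all_finite hfin).2 fun u ⟨⟨i, hi⟩, _⟩ =>
      Filter.eventually_atTop.2 ⟨i + u.length, fun N hN => ?_⟩
    rw [hi]
    exact map_range_add_infix_map_range x (by simpa using hN)
  obtain ⟨N, hN⟩ := this.exists
  exact ⟨N, Set.ncard_le_ncard (fun u hu => ⟨hN u hu, hu.2⟩) (finite_setOf_infix_and _ _)⟩

end InfiniteWords

section Constants

theorem three_le_mul_log_three_div_two {q : ℕ} {δ c₂ : ℝ}
    (hδ : δ = 3 / (2 * (log 3 - log 2)))
    (hc₂ : c₂ = δ * (log 4 + 2 * log q) + δ + δ * log 2 + 2) : 3 ≤ c₂ * log (3 / 2) := by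
  have hℓ : 0 < log 3 - log 2 := sub_pos.2 (log_lt_log two_pos (by norm_num))
  have hδℓ : δ * (log 3 - log 2) = 3 / 2 := by
    rw [hδ]
    field_simp
  have hc₂ℓ : c₂ * (log 3 - log 2) =
      3 / 2 * (log 4 + 2 * log q + 1 + log 2) + 2 * (log 3 - log 2) := by
    rw [hc₂]
    linear_combination (log 4 + 2 * log q + 1 + log 2) * hδℓ
  have hlog4 : log 4 = 2 * log 2 := by
    rw [show (4 : ℝ) = 2 ^ 2 by norm_num, log_pow]
    norm_num
  rw [log_div (by norm_num) (by norm_num), hc₂ℓ]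
  linarith [log_two_gt_d9, log_natCast_nonneg q]

theorem log_le_mul_log_four_add (q : ℕ) {δ : ℝ} (hδ : 0 ≤ δ) :
    log q ≤ (δ * log 2 + 2) * (log 4 + 2 * log q) := by
  have := log_natCast_nonneg q
  have := mul_nonneg hδ (log_nonneg one_le_two)
  have : 0 ≤ log 4 := log_nonneg (by norm_num)
  nlinarith

end Constants

theorem statement3_general (A : Type*) [Fintype A]
    (δ c₂ d β c₁ : ℝ)
    (hδ : δ = 3 / (2 * (Real.log 3 - Real.log 2)))
    (hc₂ : c₂ = δ * (Real.log 4 + 2 * Real.log (Fintype.card A)) + δ + δ * Real.log 2 + 2)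
    (hc₁ : c₁ = max
      (Real.exp ((δ * Real.log 2 + 2) * (Real.log 4 + 2 * Real.log (Fintype.card A))))
      (Real.exp (-(β + d * β + c₂ * β ^ 2))))
    (n : ℕ) (hn : 1 ≤ n) :
    (∀ w : List A, IsRichWord w →
      (FinFactorComplexity w n : ℝ) ≤ c₁ * (n : ℝ) ^ (c₂ * Real.log n)) ∧
    (∀ x : ℕ → A, IsRichInfWord x →
      (InfFactorComplexity x n : ℝ) ≤ c₁ * (n : ℝ) ^ (c₂ * Real.log n)) := by
  have hδ0 : 0 ≤ δ := hδ ▸ div_nonneg zero_le_three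
    (mul_nonneg zero_le_two (sub_nonneg.2 (log_le_log two_pos (by norm_num))))
  have hX := log_le_mul_log_four_add (Fintype.card A) hδ0
  have hexp : exp ((δ * log 2 + 2) * (log 4 + 2 * log (Fintype.card A))) ≤ c₁ :=
    hc₁ ▸ le_max_left _ _
  have hfin : ∀ w : List A, IsRichWord w →
      (FinFactorComplexity w n : ℝ) ≤ c₁ * (n : ℝ) ^ (c₂ * log n) := fun w hw =>
    hw.finFactorComplexity_le_rpow ((one_le_exp ((log_natCast_nonneg _).trans hX)).trans hexp)
      ((le_exp_log _).trans ((exp_le_exp.2 hX).trans hexp))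
      (three_le_mul_log_three_div_two hδ hc₂) hn
  refine ⟨hfin, fun x hx => ?_⟩
  obtain ⟨N, hN⟩ := exists_infFactorComplexity_le_map_range x n
  exact (Nat.cast_le.2 hN).trans (hfin _ (hx _ (isInfFactor_map_range x N)))

/-- With the constants `δ, c₂, d, α, β, c₁` of the paper, every finite or infinite
rich word `w` over an alphabet of size `q ≥ 1` satisfies
`F_w(n) ≤ c₁ · n^{c₂ ln n}` for every positive integer `n`. -/
theorem statement3 (A : Type*) [Fintype A] (hq : 1 ≤ Fintype.card A)
    (δ c₂ d α β c₁ : ℝ)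
    (hδ : δ = 3 / (2 * (Real.log 3 - Real.log 2)))
    (hc₂ : c₂ = δ * (Real.log 4 + 2 * Real.log (Fintype.card A)) + δ + δ * Real.log 2 + 2)
    (hd0 : 0 < d) (hd1 : d < 1)
    (hα : α = Real.sqrt (1 / c₂))
    (hβ : β = (-1 - d) / (2 * c₂))
    (hc₁ : c₁ = max
      (Real.exp ((δ * Real.log 2 + 2) * (Real.log 4 + 2 * Real.log (Fintype.card A))))
      (Real.exp (-(β + d * β + c₂ * β ^ 2))))
    (n : ℕ) (hn : 1 ≤ n) :
    (∀ w : List A, IsRichWord w →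
      (FinFactorComplexity w n : ℝ) ≤ c₁ * (n : ℝ) ^ (c₂ * Real.log n)) ∧
    (∀ x : ℕ → A, IsRichInfWord x →
      (InfFactorComplexity x n : ℝ) ≤ c₁ * (n : ℝ) ^ (c₂ * Real.log n)) :=
  statement3_general A δ c₂ d β c₁ hδ hc₂ hc₁ n hn
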